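/- arXiv:2405.11707 — 2 statements merged into one kernel-verified Lean document; each statement's English description precedes it below -/
import Mathlib

section
/- Let $p>2$, $C_*>0$, and suppose $u:[0,T)\to H_0^1(\Omega)$ satisfies the energy monotonicity $J(u(t))\le J(u_0)$ for all $t\in[0,T)$, where $J(\varphi)=\frac{1}{2}\|\nabla\varphi\|_2^2-\frac{1}{p}\|\varphi\|_p^p$, together with $I(u_0)<0$ and $0\le J(u_0)<d=\frac{p-2}{2p}C_*^{-2p/(p-2)}$, and assume $t\mapsto\|u(t)\|_p$ is continuous. Then there exists $\theta_2>\theta_1:=C_*^{-2/(p-2)}$ with $h(\theta_2)=J(u_0)$ (where $h(\theta)=\frac{1}{2C_*^2}\theta^2-\frac{1}{p}\theta^p$) such that $\|u(t)\|_p\ge\theta_2$ and $\|\nabla u(t)\|_2\ge\theta_2/C_*$ for all $t\in[0,T)$. -/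
set_option maxHeartbeats 1000000


/-- `V` abstracts `H_0^1(Ω)`, `np φ = ‖φ‖_p`, `gn φ = ‖∇φ‖_2`, and `u` is a curve in `V`
with `u 0 = u₀` along which `J` is nonincreasing and `t ↦ np (u t)` is continuous. -/
theorem stmt_10 (V : Type*) (np gn : V → ℝ) (p C T d : ℝ) (hp : 2 < p) (hC : 0 < C)
    (hT : 0 < T)
    (hnp : ∀ φ : V, 0 ≤ np φ) (hgn : ∀ φ : V, 0 ≤ gn φ)
    (hSob : ∀ φ : V, np φ ≤ C * gn φ)
    (J I : V → ℝ) (h : ℝ → ℝ)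
    (hJ : ∀ φ : V, J φ = 1 / 2 * (gn φ) ^ 2 - 1 / p * (np φ) ^ p)
    (hI : ∀ φ : V, I φ = (gn φ) ^ 2 - (np φ) ^ p)
    (hh : ∀ θ : ℝ, h θ = 1 / (2 * C ^ 2) * θ ^ 2 - 1 / p * θ ^ p)
    (hd : d = (p - 2) / (2 * p) * C ^ (-2 * p / (p - 2)))
    (u : ℝ → V) (u₀ : V) (hu0 : u 0 = u₀)
    (hmono : ∀ t ∈ Set.Ico (0 : ℝ) T, J (u t) ≤ J u₀)
    (hI0 : I u₀ < 0) (hJ0 : 0 ≤ J u₀) (hJd : J u₀ < d)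
    (hcont : ContinuousOn (fun t => np (u t)) (Set.Ico (0 : ℝ) T)) :
    ∃ θ₂ : ℝ, θ₂ > C ^ (-2 / (p - 2)) ∧ h θ₂ = J u₀ ∧
      ∀ t ∈ Set.Ico (0 : ℝ) T, np (u t) ≥ θ₂ ∧ gn (u t) ≥ θ₂ / C := by
  have hp0 : (0:ℝ) < p := by linarith
  have hp2 : (0:ℝ) < p - 2 := by linarith
  have hC2 : (0:ℝ) < C ^ 2 := by positivity
  set θ₁ : ℝ := C ^ (-2 / (p - 2)) with hθ₁def
  have hθ₁pos : 0 < θ₁ := Real.rpow_pos_of_pos hC _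
  -- θ₁ ^ (p-2) = C ^ (-2)
  have hθ₁pow : θ₁ ^ (p - 2) = (C ^ 2)⁻¹ := by
    rw [hθ₁def, ← Real.rpow_mul hC.le]
    have : -2 / (p - 2) * (p - 2) = ((-2 : ℤ) : ℝ) := by
      push_cast; field_simp
    rw [this, Real.rpow_intCast, zpow_neg, zpow_two]
    ring_nf
  -- h θ₁ = d
  have hhθ₁ : h θ₁ = d := by
    have hsq : θ₁ ^ 2 = C ^ (-2 / (p - 2) * 2) := by
      rw [hθ₁def, ← Real.rpow_natCast (C ^ (-2 / (p - 2))) 2, ← Real.rpow_mul hC.le]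
      norm_num
    have hpp : θ₁ ^ p = C ^ (-2 * p / (p - 2)) := by
      rw [hθ₁def, ← Real.rpow_mul hC.le]
      congr 1; field_simp
    have hC2r : (C:ℝ) ^ (2:ℕ) = C ^ ((2:ℕ):ℝ) := (Real.rpow_natCast C 2).symm
    rw [hh, hsq, hpp, hd]
    rw [show (1 : ℝ) / (2 * C ^ 2) * C ^ (-2 / (p - 2) * 2)
        = 1 / 2 * (C ^ (-2 / (p - 2) * 2) * (C ^ ((2:ℕ):ℝ))⁻¹) by rw [← hC2r]; ring]
    rw [← Real.rpow_neg hC.le, ← Real.rpow_add hC]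
    rw [show -2 / (p - 2) * 2 + -((2:ℕ):ℝ) = -2 * p / (p - 2) by push_cast; field_simp; ring]
    field_simp
  -- derivative of h
  have hderiv : ∀ x : ℝ, 0 < x → HasDerivAt h (1 / C ^ 2 * x - x ^ (p - 1)) x := by
    intro x hx
    have h1 : HasDerivAt (fun y : ℝ => y ^ p) (p * x ^ (p - 1)) x :=
      Real.hasDerivAt_rpow_const (Or.inl hx.ne')
    have h2 : HasDerivAt (fun y : ℝ => 1 / (2 * C ^ 2) * y ^ 2 - 1 / p * y ^ p)
        (1 / (2 * C ^ 2) * (2 * x) - 1 / p * (p * x ^ (p - 1))) x := by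
      exact (((hasDerivAt_pow 2 x).const_mul _).sub (h1.const_mul _)).congr_deriv (by
        push_cast; ring)
    have hfun : h = fun y : ℝ => 1 / (2 * C ^ 2) * y ^ 2 - 1 / p * y ^ p := funext hh
    rw [hfun]
    convert h2 using 1
    field_simp
  have hcont_h : ∀ x : ℝ, 0 < x → ContinuousAt h x := fun x hx =>
    (hderiv x hx).continuousAt
  -- strict antitonicity on Ici θ₁
  have hanti : StrictAntiOn h (Set.Ici θ₁) := by
    apply strictAntiOn_of_deriv_neg (convex_Ici _)
    · exact fun x hx => (hcont_h x (lt_of_lt_of_le hθ₁pos hx)).continuousWithinAt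
    · intro x hx
      rw [interior_Ici] at hx
      have hx0 : 0 < x := lt_trans hθ₁pos hx
      rw [(hderiv x hx0).deriv]
      have hxp : x ^ (p - 1) = x * x ^ (p - 2) := by
        rw [show p - 1 = 1 + (p - 2) by ring, Real.rpow_add hx0, Real.rpow_one]
      have hgt : θ₁ ^ (p - 2) < x ^ (p - 2) :=
        Real.rpow_lt_rpow hθ₁pos.le hx hp2
      rw [hθ₁pow] at hgt
      rw [hxp]
      have : 1 / C ^ 2 * x < x * x ^ (p - 2) := by
        rw [one_div]
        calc (C ^ 2)⁻¹ * x = x * (C ^ 2)⁻¹ := by ring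
        _ < x * x ^ (p - 2) := by exact (mul_lt_mul_iff_right₀ hx0).mpr hgt
      linarith
  -- Sobolev bound : h (np φ) ≤ J φ
  have hJh : ∀ φ : V, h (np φ) ≤ J φ := by
    intro φ
    rw [hh, hJ]
    have h1 : np φ ^ 2 ≤ C ^ 2 * gn φ ^ 2 := by nlinarith [hSob φ, hnp φ, hgn φ]
    have h2 : 1 / (2 * C ^ 2) * np φ ^ 2 ≤ 1 / 2 * gn φ ^ 2 := by
      rw [div_mul_eq_mul_div, div_le_iff₀ (by positivity)]
      nlinarith
    linarith
  -- np u₀ > θ₁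
  have hnp0pos : 0 < np u₀ := by
    rcases lt_or_eq_of_le (hnp u₀) with h' | h'
    · exact h'
    · exfalso
      have : (np u₀) ^ p = 0 := by rw [← h', Real.zero_rpow hp0.ne']
      rw [hI u₀, this] at hI0
      nlinarith [hgn u₀]
  have hnp0 : θ₁ < np u₀ := by
    have hIlt : gn u₀ ^ 2 < np u₀ ^ p := by have := hI0; rw [hI u₀] at this; linarith
    have h1 : np u₀ ^ 2 ≤ C ^ 2 * gn u₀ ^ 2 := by nlinarith [hSob u₀, hnp u₀, hgn u₀]
    have hsplit : np u₀ ^ p = np u₀ ^ 2 * np u₀ ^ (p - 2) := by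
      rw [← Real.rpow_natCast (np u₀) 2, ← Real.rpow_add hnp0pos]
      norm_num
    by_contra hcon
    push_neg at hcon
    have h2 : np u₀ ^ (p - 2) ≤ θ₁ ^ (p - 2) := Real.rpow_le_rpow (hnp u₀) hcon hp2.le
    rw [hθ₁pow] at h2
    have h3 : np u₀ ^ p ≤ np u₀ ^ 2 * (C ^ 2)⁻¹ := by
      rw [hsplit]
      exact mul_le_mul_of_nonneg_left h2 (by positivity)
    have h4 : C ^ 2 * gn u₀ ^ 2 < C ^ 2 * (np u₀ ^ 2 * (C ^ 2)⁻¹) := by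
      nlinarith
    rw [mul_comm (np u₀ ^ 2) _, ← mul_assoc, mul_inv_cancel₀ hC2.ne', one_mul] at h4
    linarith
  -- existence of θ₂
  have hexθ₂ : ∃ θ₂ ∈ Set.Ici θ₁, h θ₂ = J u₀ := by
    set K : ℝ := max 1 (p * (1 / (2 * C ^ 2) + J u₀ + 1)) with hK
    have hK1 : 1 ≤ K := le_max_left _ _
    have hKpos : 0 < K := by linarith
    set M : ℝ := max (θ₁ + 1) (K ^ (p - 2)⁻¹) with hM
    have hM1 : θ₁ + 1 ≤ M := le_max_left _ _
    have hMθ₁ : θ₁ < M := by linarith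
    have hMpos : 0 < M := lt_trans hθ₁pos hMθ₁
    have hM1' : 1 ≤ M := by linarith [hθ₁pos]
    have hMK : K ≤ M ^ (p - 2) := by
      calc K = (K ^ (p - 2)⁻¹) ^ (p - 2) := by
            rw [← Real.rpow_mul hKpos.le, inv_mul_cancel₀ hp2.ne', Real.rpow_one]
      _ ≤ M ^ (p - 2) := Real.rpow_le_rpow (Real.rpow_nonneg hKpos.le _)
            (le_max_right _ _) hp2.le
    have hMsplit : M ^ p = M ^ 2 * M ^ (p - 2) := by
      rw [← Real.rpow_natCast M 2, ← Real.rpow_add hMpos]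
      norm_num
    have hM2 : (1:ℝ) ≤ M ^ 2 := by nlinarith
    have hhM : h M < J u₀ := by
      have hKp : 1 / (2 * C ^ 2) + J u₀ + 1 ≤ K / p := by
        rw [le_div_iff₀ hp0]
        calc (1 / (2 * C ^ 2) + J u₀ + 1) * p = p * (1 / (2 * C ^ 2) + J u₀ + 1) := by ring
        _ ≤ K := le_max_right _ _
      have : h M ≤ M ^ 2 * (1 / (2 * C ^ 2) - K / p) := by
        rw [hh, hMsplit]
        have : 1 / p * (M ^ 2 * M ^ (p - 2)) ≥ M ^ 2 * (K / p) := by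
          rw [ge_iff_le, div_eq_mul_inv, mul_comm K p⁻¹, ← mul_assoc, mul_comm _ p⁻¹,
            one_div]
          have := mul_le_mul_of_nonneg_left hMK (by positivity : (0:ℝ) ≤ p⁻¹ * M ^ 2)
          calc p⁻¹ * M ^ 2 * K = p⁻¹ * M ^ 2 * K := rfl
          _ ≤ p⁻¹ * M ^ 2 * M ^ (p - 2) := this
          _ = p⁻¹ * (M ^ 2 * M ^ (p - 2)) := by ring
        linarith
      have h5 : M ^ 2 * (1 / (2 * C ^ 2) - K / p) ≤ 1 * (-(J u₀ + 1)) := by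
        have hneg : 1 / (2 * C ^ 2) - K / p ≤ -(J u₀ + 1) := by linarith
        calc M ^ 2 * (1 / (2 * C ^ 2) - K / p) ≤ M ^ 2 * (-(J u₀ + 1)) :=
              mul_le_mul_of_nonneg_left hneg (by positivity)
        _ ≤ 1 * (-(J u₀ + 1)) := by nlinarith
      linarith
    have hcontM : ContinuousOn h (Set.Icc θ₁ M) := fun x hx =>
      (hcont_h x (lt_of_lt_of_le hθ₁pos hx.1)).continuousWithinAt
    have := intermediate_value_Icc' hMθ₁.le hcontM
    have hmem : J u₀ ∈ Set.Icc (h M) (h θ₁) := ⟨hhM.le, by rw [hhθ₁]; exact hJd.le⟩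
    obtain ⟨θ₂, hθ₂mem, hθ₂eq⟩ := this hmem
    exact ⟨θ₂, hθ₂mem.1, hθ₂eq⟩
  obtain ⟨θ₂, hθ₂mem, hθ₂eq⟩ := hexθ₂
  have hθ₂gt : θ₁ < θ₂ := by
    rcases lt_or_eq_of_le (Set.mem_Ici.mp hθ₂mem) with h' | h'
    · exact h'
    · exfalso; rw [← h', hhθ₁] at hθ₂eq; linarith
  -- np (u t) cannot lie in [θ₁, θ₂)
  have hnot_mid : ∀ t ∈ Set.Ico (0:ℝ) T, np (u t) < θ₂ → np (u t) < θ₁ := by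
    intro t ht hlt
    by_contra hcon
    push_neg at hcon
    have := hanti hcon (le_of_lt hθ₂gt) hlt
    rw [hθ₂eq] at this
    have h1 := hJh (u t)
    have h2 := hmono t ht
    linarith
  have h0mem : (0:ℝ) ∈ Set.Ico (0:ℝ) T := ⟨le_refl _, hT⟩
  have hf0 : θ₂ ≤ np (u 0) := by
    by_contra hcon
    push_neg at hcon
    have := hnot_mid 0 h0mem hcon
    rw [hu0] at this
    linarith
  refine ⟨θ₂, hθ₂gt, hθ₂eq, ?_⟩
  intro t ht
  have hmain : np (u t) ≥ θ₂ := by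
    by_contra hcon
    push_neg at hcon
    have hlt1 : np (u t) < θ₁ := hnot_mid t ht hcon
    have hsub : Set.Icc (0:ℝ) t ⊆ Set.Ico (0:ℝ) T :=
      fun s hs => ⟨hs.1, lt_of_le_of_lt hs.2 ht.2⟩
    have hcont' : ContinuousOn (fun s => np (u s)) (Set.Icc (0:ℝ) t) := hcont.mono hsub
    have hmem : θ₁ ∈ Set.Icc (np (u t)) (np (u 0)) := ⟨hlt1.le, by linarith⟩
    obtain ⟨s, hs, hseq⟩ := intermediate_value_Icc' ht.1 hcont' hmem
    have hsmem : s ∈ Set.Ico (0:ℝ) T := hsub hs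
    have h1 := hJh (u s)
    have h2 := hmono s hsmem
    have hseq' : np (u s) = θ₁ := hseq
    rw [hseq', hhθ₁] at h1
    linarith
  refine ⟨hmain, ?_⟩
  have := hSob (u t)
  rw [ge_iff_le, div_le_iff₀ hC, mul_comm]
  linarith
end

section
/- Let $p>2$, $C_*>0$, $\theta_0>1$, $\theta_1=C_*^{-2/(p-2)}$, and suppose real numbers $N\ge\theta_0\theta_1>0$ (representing $\|u\|_p$) and $G>0$ satisfy the identity $M=\frac{p-2}{p}N^p+2G-\frac{p-2}{p}C_*^{-2p/(p-2)}$ and $G\le\frac{1}{p}N^p$. Then $M\ge\left[\frac{(\theta_0^p-1)(p-2)}{\theta_0^p}+2\right]G$. -/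
theorem stmt_12 (p C θ₀ θ₁ N G M : ℝ) (hp : 2 < p) (hC : 0 < C) (hθ₀ : 1 < θ₀)
    (hθ₁ : θ₁ = C ^ (-2 / (p - 2)))
    (hN : N ≥ θ₀ * θ₁) (hθ₁pos : 0 < θ₀ * θ₁) (hG : 0 < G)
    (hM : M = (p - 2) / p * N ^ p + 2 * G - (p - 2) / p * C ^ (-2 * p / (p - 2)))
    (hGN : G ≤ 1 / p * N ^ p) :
    M ≥ ((θ₀ ^ p - 1) * (p - 2) / θ₀ ^ p + 2) * G := by
  have hθ₀pos : (0:ℝ) < θ₀ := lt_trans one_pos hθ₀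
  have hppos : (0:ℝ) < p := by linarith
  have hθ₁p : (0:ℝ) < θ₁ := by
    rw [hθ₁]; exact Real.rpow_pos_of_pos hC _
  have hT : (1:ℝ) < θ₀ ^ p := (Real.one_lt_rpow_iff_of_pos hθ₀pos).mpr (Or.inl ⟨hθ₀, hppos⟩)
  have hTpos : (0:ℝ) < θ₀ ^ p := lt_trans one_pos hT
  have hA : θ₁ ^ p = C ^ (-2 * p / (p - 2)) := by
    rw [hθ₁, ← Real.rpow_mul hC.le]
    congr 1
    ring
  have h1 : θ₀ ^ p * C ^ (-2 * p / (p - 2)) ≤ N ^ p := by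
    rw [← hA, ← Real.mul_rpow hθ₀pos.le hθ₁p.le]
    exact Real.rpow_le_rpow hθ₁pos.le hN hppos.le
  have hGN' : p * G ≤ N ^ p := by
    have := mul_le_mul_of_nonneg_left hGN hppos.le
    field_simp at this
    linarith
  set T := θ₀ ^ p with hTdef
  set A := C ^ (-2 * p / (p - 2)) with hAdef
  have key : (T - 1) * (p - 2) * p * G ≤ (p - 2) * T * N ^ p - (p - 2) * T * A := by
    have s1 : (p - 2) * (T * A) ≤ (p - 2) * N ^ p :=
      mul_le_mul_of_nonneg_left h1 (by linarith)
    have s2 : ((p - 2) * (T - 1)) * (p * G) ≤ ((p - 2) * (T - 1)) * N ^ p :=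
      mul_le_mul_of_nonneg_left hGN' (by nlinarith)
    nlinarith [s1, s2]
  have e : M - ((T - 1) * (p - 2) / T + 2) * G =
      ((p - 2) * T * N ^ p - (p - 2) * T * A - (T - 1) * (p - 2) * p * G) / (p * T) := by
    rw [hM]; field_simp; ring
  have : 0 ≤ M - ((T - 1) * (p - 2) / T + 2) * G := by
    rw [e]
    apply div_nonneg _ (by positivity)
    linarith
  linarith
end
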